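/- Let 0 < y < 1 and let a > 0 with a ∉ [1−√y, 1+√y]; set φ(a) = a + ya/(a−1). Then m₄(φ(a)) = ∫ 1/(φ(a)−x)² dF_y(x) = (a−1)² / [((a−1)² − y)(a−1+y)²]. -/

import Mathlib

open MeasureTheory Real

/-- Density of the Marčenko–Pastur distribution with ratio parameter `c` (the absolutely
continuous part; it vanishes outside `[(1-√c)², (1+√c)²]`). -/
noncomputable def mpDensity (c x : ℝ) : ℝ :=
  if (1 - Real.sqrt c) ^ 2 ≤ x ∧ x ≤ (1 + Real.sqrt c) ^ 2 then
    Real.sqrt ((x - (1 - Real.sqrt c) ^ 2) * ((1 + Real.sqrt c) ^ 2 - x)) /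
      (2 * Real.pi * c * x)
  else 0

/-- The Marčenko–Pastur law with ratio parameter `c > 0`: an atom of mass `max (1 - 1/c) 0`
at `0` plus the absolutely continuous part with density `mpDensity c`.  For `c < 1` (in
particular for `c = y ∈ (0,1)`) the atom vanishes and this is the measure `F_y` with density
`(1/(2πxy))√((x-a_y)(b_y-x))` on `[a_y, b_y]`, `a_y = (1-√y)²`, `b_y = (1+√y)²`. -/
noncomputable def mpLaw (c : ℝ) : Measure ℝ :=
  ENNReal.ofReal (1 - 1 / c) • Measure.dirac 0 +
    (volume : Measure ℝ).withDensity fun x => ENNReal.ofReal (mpDensity c x)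

/-- The map `φ(a) = a + ya/(a-1)` sending a spike outside `[1-√y, 1+√y]` to the a.s. limit
of the corresponding extreme sample eigenvalue, outside the Marčenko–Pastur support. -/
noncomputable def phiSpike (y a : ℝ) : ℝ := a + y * a / (a - 1)

/-!
Substituting `x = 1 + y + 2√y t` turns `F_y` into the weight `(2/π) √(1 - t²) / x` on `[-1, 1]`.
With the Joukowski map `J w = (w + w⁻¹)/2` one has `x = -2√y (J(-√y) - t)` and
`φ(a) - x = 2√y (J(√y/(a-1)) - t)`, and `a ∉ [1 - √y, 1 + √y]` says exactly that `|√y/(a-1)| < 1`.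
Partial fractions then reduce `m₄(φ(a))` to the semicircle integrals
`∫ √(1 - t²)/(J z - t) dt = π z` and `∫ √(1 - t²)/(J z - t)² dt = 2π z²/(1 - z²)` for `0 < |z| < 1`,
whose antiderivatives are built from `arcsin t` and `arcsin ((1 - c t)/(c - t))`, `c = J z`.
-/

noncomputable def joukowski (z : ℝ) : ℝ := (z + z⁻¹) / 2

lemma mul_joukowski_sub_pos {z t : ℝ} (hz0 : z ≠ 0) (hz1 : z ^ 2 < 1) (ht : t ∈ Set.Icc (-1) 1) :
    0 < z * (joukowski z - t) := by
  have h : z * (joukowski z - t) = ((z - t) ^ 2 + (1 - t ^ 2)) / 2 := by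
    unfold joukowski; field_simp; ring
  obtain ⟨ht1, ht2⟩ := ht
  rw [h]
  rcases eq_or_ne (t ^ 2) 1 with h1 | h1
  · have : z ≠ t := by rintro rfl; linarith
    have := sq_pos_of_ne_zero (sub_ne_zero.mpr this)
    nlinarith
  · have : t ^ 2 < 1 := lt_of_le_of_ne (by nlinarith) h1
    nlinarith [sq_nonneg (z - t)]

lemma joukowski_sub_ne_zero {z t : ℝ} (hz0 : z ≠ 0) (hz1 : z ^ 2 < 1) (ht : t ∈ Set.Icc (-1) 1) :
    joukowski z - t ≠ 0 :=
  right_ne_zero_of_mul (mul_joukowski_sub_pos hz0 hz1 ht).ne'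

lemma joukowski_sq_sub_one {z : ℝ} (hz0 : z ≠ 0) :
    joukowski z ^ 2 - 1 = ((z⁻¹ - z) / 2) ^ 2 := by
  unfold joukowski; field_simp; ring

lemma joukowski_sub_mul_pos {z t : ℝ} (hz0 : z ≠ 0) (hz1 : z ^ 2 < 1) (ht : t ∈ Set.Icc (-1) 1) :
    0 < (joukowski z - t) * ((z⁻¹ - z) / 2) := by
  have hzd : z * ((z⁻¹ - z) / 2) = (1 - z ^ 2) / 2 := by field_simp
  have h := mul_pos (mul_joukowski_sub_pos hz0 hz1 ht) (by linarith : 0 < (1 - z ^ 2) / 2)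
  rw [← hzd] at h
  have hz2 : 0 < z ^ 2 := by positivity
  nlinarith

lemma hasDerivAt_sqrt_one_sub_sq {t : ℝ} (ht : t ∈ Set.Ioo (-1) 1) :
    HasDerivAt (fun t => √(1 - t ^ 2)) (-t / √(1 - t ^ 2)) t := by
  have h1 : 1 - t ^ 2 ≠ 0 := by nlinarith [ht.1, ht.2]
  refine (((hasDerivAt_pow 2 t).const_sub 1).sqrt h1).congr_deriv ?_
  field_simp
  ring

lemma hasDerivAt_arcsin_one_sub_mul_div_sub {c d t : ℝ} (hcd : d ^ 2 = c ^ 2 - 1)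
    (hpos : 0 < (c - t) * d) (ht : t ∈ Set.Ioo (-1) 1) :
    HasDerivAt (fun t => arcsin ((1 - c * t) / (c - t))) (-d / ((c - t) * √(1 - t ^ 2))) t := by
  obtain ⟨ht1, ht2⟩ := ht
  have hct : c - t ≠ 0 := left_ne_zero_of_mul hpos.ne'
  have hs : 0 < √(1 - t ^ 2) := Real.sqrt_pos.mpr (by nlinarith)
  have hs2 : √(1 - t ^ 2) ^ 2 = 1 - t ^ 2 := Real.sq_sqrt (by nlinarith)
  set v := (1 - c * t) / (c - t)
  have hroot : 0 < d * √(1 - t ^ 2) / (c - t) := by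
    rw [show d * √(1 - t ^ 2) / (c - t) = (c - t) * d * √(1 - t ^ 2) / (c - t) ^ 2 by
      field_simp]
    positivity
  have hv : 1 - v ^ 2 = (d * √(1 - t ^ 2) / (c - t)) ^ 2 := by
    simp only [v]; field_simp; rw [hs2, hcd]; ring
  have hv1 : v ^ 2 < 1 := by nlinarith
  have hsqrt : √(1 - v ^ 2) = d * √(1 - t ^ 2) / (c - t) := by
    rw [hv, Real.sqrt_sq hroot.le]
  have hinner : HasDerivAt (fun t => (1 - c * t) / (c - t)) ((1 - c ^ 2) / (c - t) ^ 2) t := by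
    refine (((hasDerivAt_id t).const_mul c |>.const_sub 1).div
      ((hasDerivAt_id t).const_sub c) hct).congr_deriv ?_
    simp only [id]; ring
  have h := (Real.hasDerivAt_arcsin (x := v) (by nlinarith) (by nlinarith)).comp t hinner
  rw [hsqrt] at h
  refine h.congr_deriv ?_
  have : d ≠ 0 := right_ne_zero_of_mul hpos.ne'
  field_simp
  rw [hcd]; ring

lemma intervalIntegrable_sqrt_one_sub_sq_div_joukowski_sub_pow {z : ℝ} (hz0 : z ≠ 0)
    (hz1 : z ^ 2 < 1) (n : ℕ) :
    IntervalIntegrable (fun t => √(1 - t ^ 2) / (joukowski z - t) ^ n) volume (-1) 1 := by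
  refine ContinuousOn.intervalIntegrable ?_
  rw [Set.uIcc_of_le (by norm_num)]
  exact ContinuousOn.div (by fun_prop) (by fun_prop)
    fun t ht => pow_ne_zero n (joukowski_sub_ne_zero hz0 hz1 ht)

lemma integral_sqrt_one_sub_sq_div_joukowski_sub {z : ℝ} (hz0 : z ≠ 0) (hz1 : z ^ 2 < 1) :
    ∫ t in (-1 : ℝ)..1, √(1 - t ^ 2) / (joukowski z - t) = π * z := by
  have hcd := joukowski_sq_sub_one hz0
  have hpos : ∀ t ∈ Set.Icc (-1 : ℝ) 1, 0 < (joukowski z - t) * ((z⁻¹ - z) / 2) :=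
    fun t ht => joukowski_sub_mul_pos hz0 hz1 ht
  have hcz : joukowski z - (z⁻¹ - z) / 2 = z := by unfold joukowski; ring
  have hint := intervalIntegrable_sqrt_one_sub_sq_div_joukowski_sub_pow hz0 hz1 1
  -- `d` is the square root of `c ^ 2 - 1` with the sign of `c`, for either sign of `z`.
  generalize joukowski z = c at *
  generalize (z⁻¹ - z) / 2 = d at *
  have hne : ∀ t ∈ Set.Icc (-1 : ℝ) 1, c - t ≠ 0 := fun t ht => left_ne_zero_of_mul (hpos t ht).ne'
  rw [intervalIntegral.integral_eq_sub_of_hasDerivAt_of_le (by norm_num : (-1 : ℝ) ≤ 1)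
    (f := fun t => -√(1 - t ^ 2) + c * arcsin t + d * arcsin ((1 - c * t) / (c - t)))]
  · have e1 : (1 - c * 1) / (c - 1) = -1 := by
      rw [div_eq_iff (hne 1 (by norm_num))]; ring
    have e2 : (1 - c * -1) / (c - -1) = 1 := by
      rw [div_eq_iff (hne (-1) (by norm_num))]; ring
    simp only [e1, e2, arcsin_one, arcsin_neg_one]
    rw [← hcz]
    norm_num
    ring
  · refine ContinuousOn.add (by fun_prop) (continuousOn_const.mul ?_)
    exact continuous_arcsin.comp_continuousOn (ContinuousOn.div (by fun_prop) (by fun_prop) hne)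
  · intro t ht
    have hs : 0 < √(1 - t ^ 2) := Real.sqrt_pos.mpr (by nlinarith [ht.1, ht.2])
    have hs2 : √(1 - t ^ 2) ^ 2 = 1 - t ^ 2 := Real.sq_sqrt (by nlinarith [ht.1, ht.2])
    have hct := hne t (Set.Ioo_subset_Icc_self ht)
    have h := (hasDerivAt_sqrt_one_sub_sq ht).neg.add
      ((Real.hasDerivAt_arcsin (by linarith [ht.1]) (by linarith [ht.2])).const_mul c) |>.add
      ((hasDerivAt_arcsin_one_sub_mul_div_sub hcd.symm (hpos t (Set.Ioo_subset_Icc_self ht))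
        ht).const_mul d)
    refine h.congr_deriv ?_
    field_simp
    linear_combination hcd - hs2
  · simpa using hint

lemma integral_sqrt_one_sub_sq_div_joukowski_sub_sq {z : ℝ} (hz0 : z ≠ 0) (hz1 : z ^ 2 < 1) :
    ∫ t in (-1 : ℝ)..1, √(1 - t ^ 2) / (joukowski z - t) ^ 2 = 2 * π * z ^ 2 / (1 - z ^ 2) := by
  have hpos : ∀ t ∈ Set.Icc (-1 : ℝ) 1, 0 < (joukowski z - t) * ((z⁻¹ - z) / 2) :=
    fun t ht => joukowski_sub_mul_pos hz0 hz1 ht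
  have hcd := joukowski_sq_sub_one hz0
  have hcz : 2 * π * z ^ 2 / (1 - z ^ 2) = π * (joukowski z / ((z⁻¹ - z) / 2) - 1) := by
    have : 1 - z ^ 2 ≠ 0 := by linarith
    have : 1 - z ^ 2 = z * (z⁻¹ - z) := by field_simp
    unfold joukowski; field_simp; ring
  have hint := intervalIntegrable_sqrt_one_sub_sq_div_joukowski_sub_pow hz0 hz1 2
  generalize joukowski z = c at *
  generalize (z⁻¹ - z) / 2 = d at *
  have hne : ∀ t ∈ Set.Icc (-1 : ℝ) 1, c - t ≠ 0 := fun t ht => left_ne_zero_of_mul (hpos t ht).ne'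
  have hd : d ≠ 0 := right_ne_zero_of_mul (hpos 0 (by norm_num)).ne'
  rw [intervalIntegral.integral_eq_sub_of_hasDerivAt_of_le (by norm_num : (-1 : ℝ) ≤ 1)
    (f := fun t => -arcsin t - c / d * arcsin ((1 - c * t) / (c - t)) + √(1 - t ^ 2) / (c - t))]
  · have e1 : (1 - c * 1) / (c - 1) = -1 := by
      rw [div_eq_iff (hne 1 (by norm_num))]; ring
    have e2 : (1 - c * -1) / (c - -1) = 1 := by
      rw [div_eq_iff (hne (-1) (by norm_num))]; ring
    simp only [e1, e2, arcsin_one, arcsin_neg_one]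
    rw [hcz]
    norm_num
    ring
  · refine ContinuousOn.add (ContinuousOn.sub (by fun_prop) (continuousOn_const.mul ?_))
      (ContinuousOn.div (by fun_prop) (by fun_prop) hne)
    exact continuous_arcsin.comp_continuousOn (ContinuousOn.div (by fun_prop) (by fun_prop) hne)
  · intro t ht
    have hs : 0 < √(1 - t ^ 2) := Real.sqrt_pos.mpr (by nlinarith [ht.1, ht.2])
    have hs2 : √(1 - t ^ 2) ^ 2 = 1 - t ^ 2 := Real.sq_sqrt (by nlinarith [ht.1, ht.2])
    have hct := hne t (Set.Ioo_subset_Icc_self ht)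
    have h := (Real.hasDerivAt_arcsin (by linarith [ht.1]) (by linarith [ht.2])).neg.sub
      ((hasDerivAt_arcsin_one_sub_mul_div_sub hcd.symm (hpos t (Set.Ioo_subset_Icc_self ht))
        ht).const_mul (c / d)) |>.add
      ((hasDerivAt_sqrt_one_sub_sq ht).div ((hasDerivAt_id t).const_sub c) hct)
    refine h.congr_deriv ?_
    simp only [id]
    field_simp
    ring
  · exact hint

lemma integral_sqrt_one_sub_sq_div_joukowski_sub_mul_sq {w z : ℝ} (hw0 : w ≠ 0) (hw1 : w ^ 2 < 1)
    (hz0 : z ≠ 0) (hz1 : z ^ 2 < 1) (hwz : joukowski z - joukowski w ≠ 0) :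
    ∫ t in (-1 : ℝ)..1, √(1 - t ^ 2) / ((joukowski w - t) * (joukowski z - t) ^ 2) =
      π * (w - z) / (joukowski z - joukowski w) ^ 2 -
        2 * π * z ^ 2 / ((joukowski z - joukowski w) * (1 - z ^ 2)) := by
  set L := joukowski z - joukowski w
  have hsplit : Set.EqOn (fun t => √(1 - t ^ 2) / ((joukowski w - t) * (joukowski z - t) ^ 2))
      (fun t => (L ^ 2)⁻¹ * (√(1 - t ^ 2) / (joukowski w - t) ^ 1) -
        (L ^ 2)⁻¹ * (√(1 - t ^ 2) / (joukowski z - t) ^ 1) -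
        L⁻¹ * (√(1 - t ^ 2) / (joukowski z - t) ^ 2)) (Set.uIcc (-1) 1) := by
    intro t ht
    rw [Set.uIcc_of_le (by norm_num)] at ht
    have := joukowski_sub_ne_zero hw0 hw1 ht
    have := joukowski_sub_ne_zero hz0 hz1 ht
    simp only [L] at hwz ⊢
    field_simp
    ring
  have hw := intervalIntegrable_sqrt_one_sub_sq_div_joukowski_sub_pow hw0 hw1
  have hz := intervalIntegrable_sqrt_one_sub_sq_div_joukowski_sub_pow hz0 hz1
  rw [intervalIntegral.integral_congr hsplit, intervalIntegral.integral_sub, intervalIntegral.integral_sub,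
    intervalIntegral.integral_const_mul, intervalIntegral.integral_const_mul,
    intervalIntegral.integral_const_mul]
  · simp only [pow_one]
    rw [integral_sqrt_one_sub_sq_div_joukowski_sub hw0 hw1,
      integral_sqrt_one_sub_sq_div_joukowski_sub hz0 hz1,
      integral_sqrt_one_sub_sq_div_joukowski_sub_sq hz0 hz1]
    simp only [div_eq_mul_inv, mul_inv]
    ring
  · exact (hw 1).const_mul _
  · exact (hz 1).const_mul _
  · exact ((hw 1).const_mul _).sub ((hz 1).const_mul _)
  · exact (hz 2).const_mul _

lemma mpLaw_eq_withDensity {c : ℝ} (hc0 : 0 < c) (hc1 : c ≤ 1) :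
    mpLaw c = volume.withDensity fun x => ENNReal.ofReal (mpDensity c x) := by
  have : ENNReal.ofReal (1 - 1 / c) = 0 :=
    ENNReal.ofReal_eq_zero.mpr (by rw [sub_nonpos, le_div_iff₀ hc0]; linarith)
  rw [mpLaw, this, zero_smul, zero_add]

lemma measurable_mpDensity (c : ℝ) : Measurable (mpDensity c) :=
  Measurable.ite (measurableSet_Ici.inter measurableSet_Iic) (by fun_prop) measurable_const

lemma mpDensity_nonneg {c : ℝ} (hc : 0 ≤ c) (x : ℝ) : 0 ≤ mpDensity c x := by
  unfold mpDensity
  split_ifs with h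
  · have : 0 ≤ x := (sq_nonneg _).trans h.1
    positivity
  · rfl

lemma integral_mpLaw {c : ℝ} (hc0 : 0 < c) (hc1 : c ≤ 1) (f : ℝ → ℝ) :
    ∫ x, f x ∂mpLaw c =
      2 / π * ∫ t in (-1 : ℝ)..1, √(1 - t ^ 2) * f (1 + c + 2 * √c * t) / (1 + c + 2 * √c * t) := by
  have hsc : √c ^ 2 = c := Real.sq_sqrt hc0.le
  rw [mpLaw_eq_withDensity hc0 hc1, integral_withDensity_eq_integral_toReal_smul
    (measurable_mpDensity c).ennreal_ofReal (ae_of_all _ fun _ => ENNReal.ofReal_lt_top)]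
  have hind : (fun x => (ENNReal.ofReal (mpDensity c x)).toReal • f x) =
      Set.indicator (Set.Icc ((1 - √c) ^ 2) ((1 + √c) ^ 2))
        fun x => √((x - (1 - √c) ^ 2) * ((1 + √c) ^ 2 - x)) / (2 * π * c * x) * f x := by
    funext x
    rw [ENNReal.toReal_ofReal (mpDensity_nonneg hc0.le x), smul_eq_mul, Set.indicator_apply]
    unfold mpDensity
    simp only [Set.mem_Icc]
    split_ifs <;> simp
  have hα : (1 - √c) ^ 2 = 2 * √c * (-1) + (1 + c) := by linear_combination hsc
  have hβ : (1 + √c) ^ 2 = 2 * √c * 1 + (1 + c) := by linear_combination hsc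
  rw [hind, integral_indicator measurableSet_Icc, integral_Icc_eq_integral_Ioc,
    ← intervalIntegral.integral_of_le (by nlinarith [Real.sqrt_nonneg c]), hα, hβ,
    ← intervalIntegral.smul_integral_comp_mul_add, ← intervalIntegral.integral_const_mul, smul_eq_mul,
    ← intervalIntegral.integral_const_mul]
  refine intervalIntegral.integral_congr fun t _ => ?_
  have hrad : (2 * √c * t + (1 + c) - (2 * √c * (-1) + (1 + c))) *
      (2 * √c * 1 + (1 + c) - (2 * √c * t + (1 + c))) = (2 * √c) ^ 2 * (1 - t ^ 2) := by ring
  rw [hrad, Real.sqrt_mul (by positivity), Real.sqrt_sq (by positivity)]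
  rw [show 1 + c + 2 * √c * t = 2 * √c * t + (1 + c) by ring]
  field_simp
  rw [hsc]
  ring

lemma integral_mpLaw_one_div_sub_sq {c z : ℝ} (hc0 : 0 < c) (hc1 : c < 1) (hz0 : z ≠ 0)
    (hz1 : z ^ 2 < 1) (hL : joukowski z - joukowski (-√c) ≠ 0) :
    ∫ x, 1 / (1 + c + 2 * √c * joukowski z - x) ^ 2 ∂mpLaw c =
      ((√c + z) / (joukowski z - joukowski (-√c)) ^ 2 +
        2 * z ^ 2 / ((joukowski z - joukowski (-√c)) * (1 - z ^ 2))) / (4 * √c ^ 3) := by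
  have hs0 : 0 < √c := Real.sqrt_pos.mpr hc0
  have hs2 : √c ^ 2 = c := Real.sq_sqrt hc0.le
  have hw0 : -√c ≠ 0 := by linarith
  have hw1 : (-√c) ^ 2 < 1 := by rw [neg_sq, hs2]; exact hc1
  have hx : ∀ t, 1 + c + 2 * √c * t = -(2 * √c) * (joukowski (-√c) - t) := by
    intro t; unfold joukowski; field_simp; rw [hs2]; ring
  have hintegrand : ∀ t, √(1 - t ^ 2) * (1 / (1 + c + 2 * √c * joukowski z - (1 + c + 2 * √c * t)) ^ 2) /
      (1 + c + 2 * √c * t) = -(8 * √c ^ 3)⁻¹ *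
        (√(1 - t ^ 2) / ((joukowski (-√c) - t) * (joukowski z - t) ^ 2)) := by
    intro t
    rw [add_sub_add_left_eq_sub, ← mul_sub, hx]
    simp only [div_eq_mul_inv, mul_inv, mul_pow, neg_mul, inv_neg]
    ring
  rw [integral_mpLaw hc0 hc1.le, intervalIntegral.integral_congr fun t _ => hintegrand t,
    intervalIntegral.integral_const_mul,
    integral_sqrt_one_sub_sq_div_joukowski_sub_mul_sq hw0 hw1 hz0 hz1 hL]
  field_simp
  ring

lemma lt_sq_sub_one_of_notMem_Icc {y a : ℝ} (hy : 0 ≤ y)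
    (hout : a ∉ Set.Icc (1 - √y) (1 + √y)) : y < (a - 1) ^ 2 := by
  rw [← Real.sq_sqrt hy, sq_lt_sq, abs_of_nonneg (Real.sqrt_nonneg y)]
  by_contra! h
  exact hout ⟨by linarith [neg_abs_le (a - 1)], by linarith [le_abs_self (a - 1)]⟩

/-- `m₄(φ(a)) = ∫ 1/(φ(a)−x)² dF_y(x) = (a−1)² / (((a−1)²−y)(a−1+y)²)`. -/
theorem mp_m4_phi (y a : ℝ) (hy0 : 0 < y) (hy1 : y < 1) (ha : 0 < a)
    (hout : a ∉ Set.Icc (1 - Real.sqrt y) (1 + Real.sqrt y)) :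
    (∫ x, 1 / (phiSpike y a - x) ^ 2 ∂mpLaw y) =
      (a - 1) ^ 2 / (((a - 1) ^ 2 - y) * (a - 1 + y) ^ 2) := by
  have hs0 : 0 < √y := Real.sqrt_pos.mpr hy0
  have hs2 : √y ^ 2 = y := Real.sq_sqrt hy0.le
  have hb2 : y < (a - 1) ^ 2 := lt_sq_sub_one_of_notMem_Icc hy0.le hout
  have hb0 : a - 1 ≠ 0 := fun hb => by rw [hb] at hb2; linarith
  have hby : a - 1 + y ≠ 0 := fun h => by nlinarith
  have hz0 : √y / (a - 1) ≠ 0 := div_ne_zero hs0.ne' hb0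
  have hz1 : (√y / (a - 1)) ^ 2 < 1 := by
    rwa [div_pow, div_lt_one (by positivity), hs2]
  have hphi : phiSpike y a = 1 + y + 2 * √y * joukowski (√y / (a - 1)) := by
    unfold joukowski phiSpike; field_simp; rw [hs2]; ring
  have hL : joukowski (√y / (a - 1)) - joukowski (-√y) = a * (a - 1 + y) / (2 * √y * (a - 1)) := by
    unfold joukowski; field_simp; rw [hs2]; ring
  have hL0 : joukowski (√y / (a - 1)) - joukowski (-√y) ≠ 0 := by
    rw [hL]; exact div_ne_zero (mul_ne_zero ha.ne' hby) (by positivity)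
  rw [hphi, integral_mpLaw_one_div_sub_sq hy0 hy1 hz0 hz1 hL0, hL]
  have : (a - 1) ^ 2 - y ≠ 0 := by linarith
  generalize √y = s at *
  subst hs2
  field_simp
  ring
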